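/- arXiv:0807.0468 — 4 statements merged into one kernel-verified Lean document; each statement's English description precedes it below -/
import Mathlib

section
/- Let v be an archimedean absolute value (the usual absolute value on a subfield of ℂ), and let φ(z) = a_d(z - α_1)···(z - α_d) with d ≥ 2 and a_d ≠ 0. Set A = max_i |α_i|, B = |a_d|^{-1/d}, and c = max{1, A + B}. Then for all x with |x| > c, one has |φ(x)| ≥ (|x|/c)^d. -/
/-!
If every root has modulus at most `A` and `|x| > c ≥ A + B`, each factor satisfies
`|x - αᵢ| ≥ |x| - A`, so `|φ(x)| ≥ |a_d| (|x| - A)^d = ((|x| - A) / B)^d`, as `B^d = |a_d|⁻¹`.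
Finally `(|x| - A) / B ≥ |x| / c` because `c ≥ A + B` and `|x| > c`.
-/

open Real Finset

lemma div_le_sub_div_of_add_le {A B c r : ℝ} (hA : 0 ≤ A) (hB : 0 < B) (hc : A + B ≤ c)
    (hr : c < r) : r / c ≤ (r - A) / B := by
  rw [div_le_div_iff₀ (by linarith) hB]
  nlinarith

lemma pow_sub_le_prod_norm_sub {K ι : Type*} [NormedField K] (s : Finset ι) (x : K)
    (α : ι → K) {A : ℝ} (hα : ∀ i ∈ s, ‖α i‖ ≤ A) (hx : A ≤ ‖x‖) :
    (‖x‖ - A) ^ #s ≤ ‖∏ i ∈ s, (x - α i)‖ := by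
  rw [norm_prod, ← prod_const]
  refine prod_le_prod (fun _ _ => sub_nonneg.mpr hx) fun i hi => ?_
  linarith [hα i hi, norm_sub_norm_le x (α i)]

lemma rpow_neg_one_div_natCast_pow {t : ℝ} (ht : 0 ≤ t) {n : ℕ} (hn : n ≠ 0) :
    (t ^ (-1 / n : ℝ)) ^ n = t⁻¹ := by
  rw [neg_div, one_div, rpow_neg ht, inv_pow, rpow_inv_natCast_pow ht hn]

theorem pow_div_le_norm_mul_prod_sub {K ι : Type*} [NormedField K] (s : Finset ι)
    (a x : K) (α : ι → K) {A B c : ℝ} (hα : ∀ i ∈ s, ‖α i‖ ≤ A) (hA : 0 ≤ A) (hB : 0 < B)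
    (hBa : B ^ #s = ‖a‖⁻¹) (hc : A + B ≤ c) (hx : c < ‖x‖) :
    (‖x‖ / c) ^ #s ≤ ‖a * ∏ i ∈ s, (x - α i)‖ := by
  calc (‖x‖ / c) ^ #s ≤ ((‖x‖ - A) / B) ^ #s :=
        pow_le_pow_left₀ (div_nonneg (norm_nonneg x) (by linarith))
          (div_le_sub_div_of_add_le hA hB hc hx) _
    _ = ‖a‖ * (‖x‖ - A) ^ #s := by rw [div_pow, hBa]; field_simp
    _ ≤ ‖a * ∏ i ∈ s, (x - α i)‖ := by
        rw [norm_mul]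
        gcongr
        exact pow_sub_le_prod_norm_sub s x α hα (by linarith)

/-- archimedean growth estimate outside the disk of radius `c`. -/
theorem stmt_2 (d : ℕ) (hd : 2 ≤ d) (a : ℂ) (ha : a ≠ 0) (α : Fin d → ℂ)
    (φ : ℂ → ℂ) (hφ : ∀ z : ℂ, φ z = a * ∏ i : Fin d, (z - α i))
    (A B c : ℝ)
    (hA : A = (Finset.univ : Finset (Fin d)).sup'
      (Finset.univ_nonempty_iff.mpr ⟨⟨0, by omega⟩⟩) (fun i => ‖α i‖))
    (hB : B = ‖a‖ ^ (-(1 : ℝ) / d))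
    (hc : c = max 1 (A + B))
    (x : ℂ) (hx : c < ‖x‖) :
    (‖x‖ / c) ^ d ≤ ‖φ x‖ := by
  have hαA : ∀ i ∈ univ, ‖α i‖ ≤ A := fun i hi => hA ▸ le_sup' (fun i => ‖α i‖) hi
  have hBd : B ^ #(univ : Finset (Fin d)) = ‖a‖⁻¹ := by
    rw [card_univ, Fintype.card_fin, hB]
    exact rpow_neg_one_div_natCast_pow (norm_nonneg a) (by omega)
  have h := pow_div_le_norm_mul_prod_sub univ a x α hαA
    ((norm_nonneg _).trans (hαA ⟨0, by omega⟩ (mem_univ _)))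
    (hB ▸ rpow_pos_of_pos (norm_pos_iff.mpr ha) _) hBd (hc ▸ le_max_right _ _) hx
  rwa [card_univ, Fintype.card_fin, ← hφ] at h
end

section
/- Let φ ∈ ℝ[z] be a cubic polynomial with positive lead coefficient having exactly one real fixed point γ. Then for every real x ≠ γ, the sequence φ^n(x) tends to +∞ (if x > γ) or −∞ (if x < γ). In particular, the intersection of the filled Julia set of φ with ℝ is {γ}. -/
open Real Filter

/-- a real cubic with positive lead coefficient and a unique real fixed
point has real filled Julia set equal to that single fixed point. -/
theorem stmt_11 (φ : Polynomial ℝ) (hdeg : φ.natDegree = 3)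
    (hlead : 0 < φ.leadingCoeff)
    (γ : ℝ) (hfix : φ.eval γ = γ) (huniq : ∀ y : ℝ, φ.eval y = y → y = γ) :
    (∀ x : ℝ, γ < x →
        Tendsto (fun n : ℕ => (fun y => φ.eval y)^[n] x) atTop atTop) ∧
    (∀ x : ℝ, x < γ →
        Tendsto (fun n : ℕ => (fun y => φ.eval y)^[n] x) atTop atBot) ∧
    {x : ℝ | ∃ M : ℝ, ∀ n : ℕ, |(fun y => φ.eval y)^[n] x| ≤ M} = {γ} := by
  classical
  set f : ℝ → ℝ := fun y => φ.eval y with hf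
  set p : Polynomial ℝ := φ - Polynomial.X with hp
  have hpdeg : p.natDegree = 3 := by
    rw [hp, Polynomial.natDegree_sub_eq_left_of_natDegree_lt] <;>
      simp [hdeg, Polynomial.natDegree_X]
  have hplc : p.leadingCoeff = φ.leadingCoeff := by
    have h1 : p.coeff 3 = φ.coeff 3 := by
      simp [hp, Polynomial.coeff_X]
    rw [Polynomial.leadingCoeff, Polynomial.leadingCoeff, hpdeg, hdeg, h1]
  have hplc' : 0 < p.leadingCoeff := hplc ▸ hlead
  have hpdeg' : 0 < p.degree := by
    rw [Polynomial.degree_eq_natDegree (fun h => by simp [h] at hplc'), hpdeg]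
    norm_num
  have hroot : ∀ y : ℝ, p.eval y = 0 → y = γ := by
    intro y hy
    apply huniq
    have : φ.eval y - y = 0 := by simpa [hp] using hy
    linarith
  have hcont : Continuous fun y : ℝ => p.eval y := p.continuous
  -- sign of p on (γ, ∞)
  have hpos : ∀ y : ℝ, γ < y → 0 < p.eval y := by
    intro y hy
    by_contra h
    push_neg at h
    have hne : p.eval y ≠ 0 := fun h0 => absurd (hroot y h0) (by intro e; rw [e] at hy; exact lt_irrefl _ hy)
    have hlt : p.eval y < 0 := lt_of_le_of_ne h hne
    have htop : Tendsto (fun x => p.eval x) atTop atTop :=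
      p.tendsto_atTop_of_leadingCoeff_nonneg hpdeg' hplc'.le
    obtain ⟨z, hz1, hz2⟩ := ((htop.eventually (eventually_gt_atTop 0)).and
      (eventually_ge_atTop (y + 1))).exists
    have hyz : y ≤ z := by linarith
    have := intermediate_value_Ioo hyz (hcont.continuousOn)
    have h0 : (0:ℝ) ∈ Set.Ioo (p.eval y) (p.eval z) := ⟨hlt, hz1⟩
    obtain ⟨w, hw, hw0⟩ := this h0
    have hwγ : w = γ := hroot w hw0
    have hγw : γ < w := lt_trans hy hw.1
    rw [hwγ] at hγw; exact lt_irrefl _ hγw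
  -- sign of p on (-∞, γ)
  have hneg : ∀ y : ℝ, y < γ → p.eval y < 0 := by
    intro y hy
    by_contra h
    push_neg at h
    have hne : p.eval y ≠ 0 := fun h0 => absurd (hroot y h0) (by intro e; rw [e] at hy; exact lt_irrefl _ hy)
    have hlt : 0 < p.eval y := lt_of_le_of_ne h (Ne.symm hne)
    -- p ∘ (-X) tends to atBot along atTop
    set q : Polynomial ℝ := p.comp (-Polynomial.X) with hq
    have hqeval : ∀ x : ℝ, q.eval x = p.eval (-x) := by
      intro x; simp [hq, Polynomial.eval_comp]
    have hqdeg : q.natDegree = 3 := by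
      rw [hq, Polynomial.natDegree_comp]
      simp [hpdeg]
    have hqlc : q.leadingCoeff = -p.leadingCoeff := by
      rw [hq, Polynomial.leadingCoeff_comp (by simp)]
      simp [hpdeg]; ring
    have hqdeg' : 0 < q.degree := by
      rw [Polynomial.degree_eq_natDegree (fun h => by simp [h] at hqdeg), hqdeg]
      norm_num
    have hqbot : Tendsto (fun x => q.eval x) atTop atBot :=
      q.tendsto_atBot_of_leadingCoeff_nonpos hqdeg' (by rw [hqlc]; linarith)
    obtain ⟨z, hz1, hz2⟩ := ((hqbot.eventually (eventually_lt_atBot 0)).and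
      (eventually_ge_atTop (-y + 1))).exists
    have hzy : -z ≤ y := by linarith
    have hpz : p.eval (-z) < 0 := by rw [← hqeval]; exact hz1
    have := intermediate_value_Ioo hzy (hcont.continuousOn)
    have h0 : (0:ℝ) ∈ Set.Ioo (p.eval (-z)) (p.eval y) := ⟨hpz, hlt⟩
    obtain ⟨w, hw, hw0⟩ := this h0
    have hwγ : w = γ := hroot w hw0
    have : w < γ := lt_trans hw.2 hy
    rw [hwγ] at this; exact lt_irrefl _ this
  have hstep_pos : ∀ y : ℝ, γ < y → y < f y := by
    intro y hy
    have := hpos y hy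
    simp only [hp, Polynomial.eval_sub, Polynomial.eval_X] at this
    simpa [hf] using by linarith
  have hstep_neg : ∀ y : ℝ, y < γ → f y < y := by
    intro y hy
    have := hneg y hy
    simp only [hp, Polynomial.eval_sub, Polynomial.eval_X] at this
    simpa [hf] using by linarith
  have hfcont : Continuous f := φ.continuous
  -- part 1
  have part1 : ∀ x : ℝ, γ < x → Tendsto (fun n : ℕ => f^[n] x) atTop atTop := by
    intro x hx
    set a : ℕ → ℝ := fun n => f^[n] x with ha
    have hkey : ∀ n, γ < a n := by
      intro n
      induction n with
      | zero => simpa [ha] using hx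
      | succ n ih =>
        have : a n < f (a n) := hstep_pos _ ih
        have heq : a (n + 1) = f (a n) := by
          simp [ha, Function.iterate_succ_apply']
        rw [heq]; exact lt_trans ih this
    have hmono : Monotone a := by
      apply monotone_nat_of_le_succ
      intro n
      have heq : a (n + 1) = f (a n) := by simp [ha, Function.iterate_succ_apply']
      rw [heq]
      exact (hstep_pos _ (hkey n)).le
    rcases tendsto_of_monotone hmono with h | ⟨l, hl⟩
    · exact h
    · exfalso
      have h1 : Tendsto (fun n => a (n + 1)) atTop (nhds l) :=
        hl.comp (tendsto_add_atTop_nat 1)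
      have h2 : Tendsto (fun n => f (a n)) atTop (nhds (f l)) :=
        (hfcont.tendsto l).comp hl
      have h12 : (fun n => a (n + 1)) = fun n => f (a n) := by
        funext n; simp [ha, Function.iterate_succ_apply']
      rw [h12] at h1
      have hfl : f l = l := tendsto_nhds_unique h2 h1
      have hlγ : l = γ := huniq l hfl
      have : a 0 ≤ l := hmono.ge_of_tendsto hl 0
      have : x ≤ γ := by simpa [ha, hlγ] using this
      linarith
  -- part 2
  have part2 : ∀ x : ℝ, x < γ → Tendsto (fun n : ℕ => f^[n] x) atTop atBot := by
    intro x hx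
    set a : ℕ → ℝ := fun n => f^[n] x with ha
    have hkey : ∀ n, a n < γ := by
      intro n
      induction n with
      | zero => simpa [ha] using hx
      | succ n ih =>
        have : f (a n) < a n := hstep_neg _ ih
        have heq : a (n + 1) = f (a n) := by
          simp [ha, Function.iterate_succ_apply']
        rw [heq]; exact lt_trans this ih
    have hmono : Antitone a := by
      apply antitone_nat_of_succ_le
      intro n
      have heq : a (n + 1) = f (a n) := by simp [ha, Function.iterate_succ_apply']
      rw [heq]
      exact (hstep_neg _ (hkey n)).le
    rcases tendsto_of_antitone hmono with h | ⟨l, hl⟩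
    · exact h
    · exfalso
      have h1 : Tendsto (fun n => a (n + 1)) atTop (nhds l) :=
        hl.comp (tendsto_add_atTop_nat 1)
      have h2 : Tendsto (fun n => f (a n)) atTop (nhds (f l)) :=
        (hfcont.tendsto l).comp hl
      have h12 : (fun n => a (n + 1)) = fun n => f (a n) := by
        funext n; simp [ha, Function.iterate_succ_apply']
      rw [h12] at h1
      have hfl : f l = l := tendsto_nhds_unique h2 h1
      have hlγ : l = γ := huniq l hfl
      have : l ≤ a 0 := hmono.le_of_tendsto hl 0
      have : γ ≤ x := by simpa [ha, hlγ] using this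
      linarith
  refine ⟨part1, part2, ?_⟩
  ext x
  simp only [Set.mem_setOf_eq, Set.mem_singleton_iff]
  constructor
  · rintro ⟨M, hM⟩
    by_contra hne
    rcases lt_or_gt_of_ne hne with hlt | hgt
    · -- x < γ : tends to atBot
      have h := part2 x hlt
      obtain ⟨n, hn⟩ := (h.eventually (eventually_lt_atBot (-(|M| + 1)))).exists
      have : |f^[n] x| ≤ M := hM n
      have h1 : -(|M|+1) ≤ f^[n] x := neg_le_of_abs_le (this.trans (le_abs_self M)) |>.trans' (by
        have := neg_abs_le M; linarith)
      linarith
    · have h := part1 x hgt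
      obtain ⟨n, hn⟩ := (h.eventually (eventually_gt_atTop (|M| + 1))).exists
      have h2 : |f^[n] x| ≤ M := hM n
      have : f^[n] x ≤ |f^[n] x| := le_abs_self _
      have : M < |M| + 1 := by have := le_abs_self M; linarith
      linarith [le_abs_self M]
  · rintro rfl
    refine ⟨|x|, fun n => ?_⟩
    rw [Function.iterate_fixed (show (fun y => φ.eval y) x = x from hfix) n]
end

section
/- Let φ ∈ ℝ[z] be a cubic with positive lead coefficient a > 0 and real fixed points γ1 ≤ γ2 ≤ γ3 (at least two distinct). Then every real point with bounded forward orbit lies in [γ1, γ3], and moreover the preimage φ^{−1}([γ1, γ3]) ∩ ℝ is contained in [γ1, γ1 + a^{−1/2}] ∪ [γ2 − a^{−1/2}, γ2 + a^{−1/2}] ∪ [γ3 − a^{−1/2}, γ3]. -/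
open Real Set


private lemma cube_mono (a u1 u2 u3 v1 v2 v3 : ℝ) (ha : 0 ≤ a)
    (h1 : 0 ≤ u1) (h2 : 0 ≤ u2) (h3 : 0 ≤ u3)
    (e1 : u1 ≤ v1) (e2 : u2 ≤ v2) (e3 : u3 ≤ v3) :
    a * (u1 * u2 * u3) ≤ a * (v1 * v2 * v3) := by
  have h12 : u1 * u2 ≤ v1 * v2 := mul_le_mul e1 e2 h2 (le_trans h1 e1)
  have h123 : u1 * u2 * u3 ≤ v1 * v2 * v3 :=
    mul_le_mul h12 e3 h3 (mul_nonneg (le_trans h1 e1) (le_trans h2 e2))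
  exact mul_le_mul_of_nonneg_left h123 ha

/-- for a real cubic with positive lead coefficient and fixed points
`γ1 ≤ γ2 ≤ γ3` (not all equal), bounded orbits lie in `[γ1, γ3]`, and the preimage
of `[γ1, γ3]` lies in three short intervals. -/
theorem stmt_12 (a γ1 γ2 γ3 : ℝ) (ha : 0 < a)
    (h12 : γ1 ≤ γ2) (h23 : γ2 ≤ γ3) (h13 : γ1 ≠ γ3)
    (φ : ℝ → ℝ)
    (hφ : ∀ z : ℝ, φ z = a * (z - γ1) * (z - γ2) * (z - γ3) + z) :
    (∀ x : ℝ, (∃ M : ℝ, ∀ n : ℕ, |φ^[n] x| ≤ M) → x ∈ Icc γ1 γ3) ∧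
    (∀ x : ℝ, φ x ∈ Icc γ1 γ3 →
        x ∈ Icc γ1 (γ1 + a ^ (-(1 : ℝ) / 2)) ∪
          Icc (γ2 - a ^ (-(1 : ℝ) / 2)) (γ2 + a ^ (-(1 : ℝ) / 2)) ∪
          Icc (γ3 - a ^ (-(1 : ℝ) / 2)) γ3) := by
  set s := a ^ (-(1 : ℝ) / 2) with hs_def
  have hs_pos : 0 < s := Real.rpow_pos_of_pos ha _
  have hss : a * (s * s) = 1 := by
    have : s * s = a ^ (-1 : ℝ) := by
      rw [hs_def, ← Real.rpow_add ha]; norm_num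
    rw [this, Real.rpow_neg_one, mul_inv_cancel₀ ha.ne']
  constructor
  · rintro x ⟨M, hM⟩
    by_contra hx
    simp only [mem_Icc, not_and_or, not_le] at hx
    rcases hx with hx | hx
    · -- x < γ1 : orbit goes to -∞
      set c := a * (γ1 - x) * (γ2 - x) * (γ3 - x) with hc
      have h1 : (0:ℝ) < γ1 - x := by linarith
      have h2 : (0:ℝ) < γ2 - x := by linarith
      have h3 : (0:ℝ) < γ3 - x := by linarith
      have hc_pos : 0 < c := by positivity
      have key : ∀ n : ℕ, φ^[n] x ≤ x - n * c := by
        intro n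
        induction n with
        | zero => simp
        | succ n ih =>
          rw [Function.iterate_succ_apply', hφ]
          set y := φ^[n] x with hy_def
          have hy : y ≤ x := by
            have : (0:ℝ) ≤ n * c := by positivity
            linarith
          have hb : a * (y - γ1) * (y - γ2) * (y - γ3) ≤ -c := by
            have H := cube_mono a (γ1 - x) (γ2 - x) (γ3 - x) (γ1 - y) (γ2 - y) (γ3 - y)
              ha.le h1.le h2.le h3.le (by linarith) (by linarith) (by linarith)
            nlinarith [H]
          push_cast
          linarith
      obtain ⟨n, hn⟩ := exists_nat_gt ((x + M) / c)
      have hMn := abs_le.mp (hM n)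
      have hk := key n
      have : (x + M) / c * c < n * c := by
        exact mul_lt_mul_of_pos_right hn hc_pos
      rw [div_mul_cancel₀ _ hc_pos.ne'] at this
      linarith [hMn.1]
    · -- x > γ3 : orbit goes to +∞
      set c := a * (x - γ1) * (x - γ2) * (x - γ3) with hc
      have h1 : (0:ℝ) < x - γ1 := by linarith
      have h2 : (0:ℝ) < x - γ2 := by linarith
      have h3 : (0:ℝ) < x - γ3 := by linarith
      have hc_pos : 0 < c := by positivity
      have key : ∀ n : ℕ, x + n * c ≤ φ^[n] x := by
        intro n
        induction n with
        | zero => simp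
        | succ n ih =>
          rw [Function.iterate_succ_apply', hφ]
          set y := φ^[n] x with hy_def
          have hy : x ≤ y := by
            have : (0:ℝ) ≤ n * c := by positivity
            linarith
          have hb : c ≤ a * (y - γ1) * (y - γ2) * (y - γ3) := by
            have H := cube_mono a (x - γ1) (x - γ2) (x - γ3) (y - γ1) (y - γ2) (y - γ3)
              ha.le h1.le h2.le h3.le (by linarith) (by linarith) (by linarith)
            nlinarith [H]
          push_cast
          linarith
      obtain ⟨n, hn⟩ := exists_nat_gt ((M - x) / c)
      have hMn := abs_le.mp (hM n)
      have hk := key n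
      have : (M - x) / c * c < n * c := mul_lt_mul_of_pos_right hn hc_pos
      rw [div_mul_cancel₀ _ hc_pos.ne'] at this
      linarith [hMn.2]
  · intro x hx
    rw [hφ, mem_Icc] at hx
    obtain ⟨hx1, hx3⟩ := hx
    have hxl : γ1 ≤ x := by
      by_contra h
      push_neg at h
      nlinarith [mul_pos (mul_pos (mul_pos ha (show (0:ℝ) < γ1 - x by linarith))
        (show (0:ℝ) < γ2 - x by linarith)) (show (0:ℝ) < γ3 - x by linarith)]
    have hxr : x ≤ γ3 := by
      by_contra h
      push_neg at h
      nlinarith [mul_pos (mul_pos (mul_pos ha (show (0:ℝ) < x - γ1 by linarith))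
        (show (0:ℝ) < x - γ2 by linarith)) (show (0:ℝ) < x - γ3 by linarith)]
    by_contra hcon
    simp only [mem_union, mem_Icc, not_or, not_and_or, not_le] at hcon
    obtain ⟨⟨hA, hB⟩, hC⟩ := hcon
    have hA' : γ1 + s < x := by
      rcases hA with h | h
      · linarith
      · exact h
    have hC' : x < γ3 - s := by
      rcases hC with h | h
      · exact h
      · linarith
    rcases hB with hB | hB
    · -- x < γ2 - s : then φ x > γ3
      have hg1 : s < x - γ1 := by linarith
      have hg2 : s < γ2 - x := by linarith
      have hg3 : 0 < γ3 - x := by linarith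
      have hq : s * s < (x - γ1) * (γ2 - x) := by nlinarith [hs_pos]
      have hkey : 1 < a * ((x - γ1) * (γ2 - x)) := by
        calc 1 = a * (s * s) := hss.symm
        _ < a * ((x - γ1) * (γ2 - x)) := by exact mul_lt_mul_of_pos_left hq ha
      nlinarith [mul_pos hg3 (show (0:ℝ) < a * ((x - γ1) * (γ2 - x)) - 1 by linarith)]
    · -- x > γ2 + s : then φ x < γ1
      have hg1 : 0 < x - γ1 := by linarith
      have hg2 : s < x - γ2 := by linarith
      have hg3 : s < γ3 - x := by linarith
      have hq : s * s < (x - γ2) * (γ3 - x) := by nlinarith [hs_pos]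
      have hkey : 1 < a * ((x - γ2) * (γ3 - x)) := by
        calc 1 = a * (s * s) := hss.symm
        _ < a * ((x - γ2) * (γ3 - x)) := by exact mul_lt_mul_of_pos_left hq ha
      nlinarith [mul_pos hg1 (show (0:ℝ) < a * ((x - γ2) * (γ3 - x)) - 1 by linarith)]
end

section
/- Let φ(z) ∈ ℚ[z] be a polynomial of degree d ≥ 2 with lead coefficient a, and suppose that for each place v of ℚ there are constants satisfying: λ̂_{v,φ}(y) = λ_v(y) at places of good reduction, and −(d/(d−1))·log c_v ≤ λ̂_{v,φ}(y) − λ_v(γ y) ≤ (1/(d−1))·log C_v at bad places, where γ is an e-th root of a. Then for all x ∈ ℚ and n ≥ 0, −d^{−n}·c̃ ≤ ĥ_φ(x) − (1/(e d^n))·h(a·(φ^n(x))^e) ≤ d^{−n}·C̃, where c̃ = (d/(d−1))·Σ_{v bad} log c_v and C̃ = (1/(d−1))·Σ_{v bad} log C_v. -/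
open Real Finset

/-! Away from the finitely many bad places the local canonical height and the scaled local
height `e⁻¹ λ_v(a yᵉ)` coincide, so with `y = φⁿ(x)` the global difference
`ĥ(y) - e⁻¹ h(a yᵉ)` is a finite sum over bad places, bounded termwise by the local
estimates. Since `ĥ(y) = dⁿ ĥ(x)`, dividing by `dⁿ` gives the claim. -/

lemma Function.Semiconj.apply_iterate_eq_pow_mul {α M : Type*} [Monoid M] {f : α → α}
    {H : α → M} {d : M} (hH : Function.Semiconj H f (d * ·)) (n : ℕ) (x : α) :
    H (f^[n] x) = d ^ n * H x := by
  rw [hH.iterate_right n x, mul_left_iterate_apply]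

lemma HasSum.sub_eq_sum_of_eq_of_notMem {ι α : Type*} [AddCommGroup α] [TopologicalSpace α]
    [IsTopologicalAddGroup α] [T2Space α] {f g : ι → α} {a b : α} {s : Finset ι}
    (hf : HasSum f a) (hg : HasSum g b) (hfg : ∀ i ∉ s, f i = g i) :
    a - b = ∑ i ∈ s, (f i - g i) :=
  (hf.sub hg).unique <| hasSum_sum_of_ne_finset_zero fun i hi => sub_eq_zero.2 (hfg i hi)

theorem stmt_18_general (φ : Polynomial ℚ) (d : ℕ) (hd : 2 ≤ d)
    (a : ℚ) (e : ℕ) (he : 1 ≤ e)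
    (ι : Type*) (bad : Finset ι)
    (lam lamhat : ι → ℚ → ℝ) (h H : ℚ → ℝ)
    (c C : ι → ℝ)
    (hsum : ∀ x : ℚ, HasSum (fun w : ι => lam w x) (h x))
    (hsumhat : ∀ x : ℚ, HasSum (fun w : ι => lamhat w x) (H x))
    (hfunc : ∀ x : ℚ, H (φ.eval x) = (d : ℝ) * H x)
    (hgood : ∀ w : ι, w ∉ bad → ∀ y : ℚ,
      lamhat w y = lam w y ∧ lam w (a * y ^ e) = (e : ℝ) * lam w y)
    (hbad : ∀ w ∈ bad, ∀ y : ℚ,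
      -((d : ℝ) / ((d : ℝ) - 1)) * Real.log (c w) ≤
          lamhat w y - ((e : ℝ))⁻¹ * lam w (a * y ^ e) ∧
      lamhat w y - ((e : ℝ))⁻¹ * lam w (a * y ^ e) ≤
        (((d : ℝ) - 1))⁻¹ * Real.log (C w)) :
    ∀ (x : ℚ) (n : ℕ),
      -(((d : ℝ) ^ n)⁻¹ * ((d : ℝ) / ((d : ℝ) - 1) * ∑ w ∈ bad, Real.log (c w))) ≤
          H x - ((e : ℝ) * (d : ℝ) ^ n)⁻¹ * h (a * ((fun y => φ.eval y)^[n] x) ^ e) ∧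
      H x - ((e : ℝ) * (d : ℝ) ^ n)⁻¹ * h (a * ((fun y => φ.eval y)^[n] x) ^ e) ≤
        ((d : ℝ) ^ n)⁻¹ * ((((d : ℝ) - 1))⁻¹ * ∑ w ∈ bad, Real.log (C w)) := by
  intro x n
  set y := (fun y => φ.eval y)^[n] x
  have he0 : (e : ℝ) ≠ 0 := by positivity
  have hdn : (0 : ℝ) < (d : ℝ) ^ n := by positivity
  have hHy : H y = (d : ℝ) ^ n * H x := Function.Semiconj.apply_iterate_eq_pow_mul hfunc n x
  have hfinite : H y - (e : ℝ)⁻¹ * h (a * y ^ e) =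
      ∑ w ∈ bad, (lamhat w y - (e : ℝ)⁻¹ * lam w (a * y ^ e)) :=
    (hsumhat y).sub_eq_sum_of_eq_of_notMem ((hsum (a * y ^ e)).mul_left _) fun w hw => by
      rw [(hgood w hw y).1, (hgood w hw y).2, inv_mul_cancel_left₀ he0]
  have hrescale : H x - ((e : ℝ) * (d : ℝ) ^ n)⁻¹ * h (a * y ^ e) =
      ((d : ℝ) ^ n)⁻¹ * (H y - (e : ℝ)⁻¹ * h (a * y ^ e)) := by
    rw [hHy]; field_simp
  rw [hrescale, hfinite, ← mul_neg]
  constructor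
  · refine mul_le_mul_of_nonneg_left ?_ (inv_nonneg.2 hdn.le)
    rw [mul_sum, ← sum_neg_distrib]
    exact sum_le_sum fun w hw => by linarith [(hbad w hw y).1]
  · refine mul_le_mul_of_nonneg_left ?_ (inv_nonneg.2 hdn.le)
    rw [mul_sum]
    exact sum_le_sum fun w hw => (hbad w hw y).2

/-- Theorem `ghest`: accurate estimation of the canonical height via
the scaled iterate `a·(φⁿ(x))ᵉ`.  Places of `ℚ` are abstracted as an index type `ι`
carrying the standard local heights `lam v` and local canonical heights `lamhat v`,
which sum to the global height `h` and canonical height `H` respectively.  At the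
(cofinitely many) good places `λ̂_v = λ_v` and `λ_v(a yᵉ) = e·λ_v(y)` (i.e.
`λ_v(γ y) = λ_v(y)` for `γ = a^{1/e}`), while at the bad places the local canonical
height differs from `λ_v(γ y) = (1/e)·λ_v(a yᵉ)` by the stated constants. -/
theorem stmt_18 (φ : Polynomial ℚ) (d : ℕ) (hdeg : φ.natDegree = d) (hd : 2 ≤ d)
    (a : ℚ) (hlead : φ.leadingCoeff = a) (e : ℕ) (he : 1 ≤ e)
    (ι : Type*) (bad : Finset ι)
    (lam lamhat : ι → ℚ → ℝ) (h H : ℚ → ℝ)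
    (c C : ι → ℝ)
    (hsum : ∀ x : ℚ, HasSum (fun w : ι => lam w x) (h x))
    (hsumhat : ∀ x : ℚ, HasSum (fun w : ι => lamhat w x) (H x))
    (hfunc : ∀ x : ℚ, H (φ.eval x) = (d : ℝ) * H x)
    (hgood : ∀ w : ι, w ∉ bad → ∀ y : ℚ,
      lamhat w y = lam w y ∧ lam w (a * y ^ e) = (e : ℝ) * lam w y)
    (hbad : ∀ w ∈ bad, ∀ y : ℚ,
      -((d : ℝ) / ((d : ℝ) - 1)) * Real.log (c w) ≤
          lamhat w y - ((e : ℝ))⁻¹ * lam w (a * y ^ e) ∧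
      lamhat w y - ((e : ℝ))⁻¹ * lam w (a * y ^ e) ≤
        (((d : ℝ) - 1))⁻¹ * Real.log (C w)) :
    ∀ (x : ℚ) (n : ℕ),
      -(((d : ℝ) ^ n)⁻¹ * ((d : ℝ) / ((d : ℝ) - 1) * ∑ w ∈ bad, Real.log (c w))) ≤
          H x - ((e : ℝ) * (d : ℝ) ^ n)⁻¹ * h (a * ((fun y => φ.eval y)^[n] x) ^ e) ∧
      H x - ((e : ℝ) * (d : ℝ) ^ n)⁻¹ * h (a * ((fun y => φ.eval y)^[n] x) ^ e) ≤
        ((d : ℝ) ^ n)⁻¹ * ((((d : ℝ) - 1))⁻¹ * ∑ w ∈ bad, Real.log (C w)) :=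
  stmt_18_general φ d hd a e he ι bad lam lamhat h H c C hsum hsumhat hfunc hgood hbad
end
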